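/- In the Hopf algebra H of binary forests, the coproduct of the comb tree C_n with n ≥ 2 leaves is Δ(C_n) = Σ_{i=0}^{n-2} C(n-2,i)·C_1^i ⊗ C_{n-i} + 2·Σ_{j=0}^{n-2} C(n-2,j)·C_1^{j+1} ⊗ C_{n-j-1} + Σ_{k=2}^{n-1} Σ_{ℓ=0}^{n-k-1} C(n-k-1,ℓ)·C_k·C_1^ℓ ⊗ C_{n-k-ℓ} + C_n ⊗ 1, where C(m,i) denotes the binomial coefficient; in particular, the comb trees generate a Hopf subalgebra of H. -/

import Mathlib

/-- Full binary rooted trees. -/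
inductive BTree : Type
  | leaf : BTree
  | node : BTree → BTree → BTree
  deriving DecidableEq

namespace BTree

/-- Positions (root-to-leaf paths) of the leaves of a tree. -/
def leafPos : BTree → List (List Bool)
  | leaf => [[]]
  | node l r => (leafPos l).map (List.cons false) ++ (leafPos r).map (List.cons true)

/-- The maximal subtrees of the tree (sitting at position `q`) all of whose
leaves belong to the leaf subset with characteristic function `p`: the pruned
forest `F_A` of the cut corresponding to `A = {leaves ℓ | p ℓ}`. -/
def maxSub (p : List Bool → Bool) : BTree → List Bool → List BTree
  | leaf, q => if p q then [leaf] else []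
  | node l r, q =>
      if (leafPos (node l r)).all (fun s => p (q ++ s)) then [node l r]
      else maxSub p l (q ++ [false]) ++ maxSub p r (q ++ [true])

/-- The remainder `T/A` of the cut: delete all vertices all of whose
descendant leaves lie in `A` and suppress the resulting degree-2 vertices
(contracting back to a full binary tree); `none` if everything is deleted. -/
def quotA (p : List Bool → Bool) : BTree → List Bool → Option BTree
  | leaf, q => if p q then none else some leaf
  | node l r, q =>
      match quotA p l (q ++ [false]), quotA p r (q ++ [true]) with
      | some l', some r' => some (node l' r')
      | some l', none => some l'
      | none, some r' => some r'
      | none, none => none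

/-- The unlabelled comb tree with `n` leaves (`n ≥ 1`). -/
def comb : ℕ → BTree
  | 0 => leaf
  | 1 => leaf
  | n + 2 => node (comb (n + 1)) leaf

end BTree

noncomputable section
open scoped TensorProduct

/-- The Hopf algebra `H` of (unlabelled nonplanar) binary forests: the
polynomial algebra on binary trees, realized as the monoid algebra of the
free commutative monoid of forests (multisets of trees). -/
abbrev V : Type := AddMonoidAlgebra ℚ (Multiset BTree)

/-- Basis vector of a forest. -/
noncomputable def fδ (m : Multiset BTree) : V := AddMonoidAlgebra.single m 1

/-- The forest associated to an optional tree (empty forest for `none`). -/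
def optForest : Option BTree → Multiset BTree
  | none => 0
  | some t => {t}

/-- The coproduct of a tree, indexed by the subsets `A` of its set of leaves
(equivalently, by the binary-admissible cuts together with the total cut):
`Δ(T) = Σ_{A ⊆ L(T)} F_A ⊗ T/A`. -/
noncomputable def treeDelta (T : BTree) : V ⊗[ℚ] V :=
  ∑ A ∈ (BTree.leafPos T).toFinset.powerset,
    fδ ↑(BTree.maxSub (fun q => decide (q ∈ A)) T []) ⊗ₜ[ℚ]
      fδ (optForest (BTree.quotA (fun q => decide (q ∈ A)) T []))

/-- A forest all of whose trees are comb trees. -/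
def CombForest (m : Multiset BTree) : Prop :=
  ∀ t ∈ m, ∃ k : ℕ, t = BTree.comb (k + 1)

/-! A cut of the comb `C_{N+1}` is a set `A` of its leaves. If `A` misses the bottom leaf, the pruned
forest consists of `|A|` single leaves and the remainder is `C_{N+1-|A|}`. If `A` contains the bottom
leaf, let `k + 1` be the length of the run of cut leaves at the bottom; the pruned forest is
`C_{k+1}` together with the other cut leaves, which lie above the first uncut leaf, and the remainder
is again a comb. Counting the free choices of those other leaves gives the binomial coefficients;
Pascal's rule splits the first family into the first two sums, and the runs of length one (where
`C_1` is a leaf) supply the second half of the factor `2`. Since every pruned subtree and every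
remainder of a comb is a comb, the comb forests span a subcoalgebra. -/

open Finset

namespace BTree

lemma maxSub_append (p : List Bool → Bool) (t : BTree) (q : List Bool) :
    maxSub p t q = maxSub (fun s => p (q ++ s)) t [] := by
  induction t generalizing p q with
  | leaf => simp [maxSub]
  | node l r ihl ihr =>
    simp only [maxSub, List.nil_append]
    rw [ihl p, ihr p, ihl _ [false], ihr _ [true]]
    simp [List.append_assoc]

lemma quotA_append (p : List Bool → Bool) (t : BTree) (q : List Bool) :
    quotA p t q = quotA (fun s => p (q ++ s)) t [] := by
  induction t generalizing p q with
  | leaf => simp [quotA]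
  | node l r ihl ihr =>
    simp only [quotA, List.nil_append]
    rw [ihl p, ihr p, ihl _ [false], ihr _ [true]]
    simp [List.append_assoc]

lemma maxSub_node_nil (p : List Bool → Bool) (l r : BTree) :
    maxSub p (node l r) [] =
      if (leafPos (node l r)).all p then [node l r]
      else maxSub (fun s => p (false :: s)) l [] ++ maxSub (fun s => p (true :: s)) r [] := by
  rw [maxSub, maxSub_append _ l, maxSub_append _ r]
  rfl

lemma quotA_node_nil (p : List Bool → Bool) (l r : BTree) :
    quotA p (node l r) [] =
      Option.merge node (quotA (fun s => p (false :: s)) l [])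
        (quotA (fun s => p (true :: s)) r []) := by
  rw [quotA, quotA_append _ l, quotA_append _ r]
  simp only [List.nil_append, List.cons_append]
  rcases quotA (fun s => p (false :: s)) l [] with _ | _ <;>
    rcases quotA (fun s => p (true :: s)) r [] with _ | _ <;> rfl

lemma maxSub_of_forall_leafPos (p : List Bool → Bool) (t : BTree) (q : List Bool)
    (h : ∀ s ∈ leafPos t, p (q ++ s)) : maxSub p t q = [t] := by
  cases t with
  | leaf => simpa [maxSub, leafPos] using h
  | node l r => simp_all [maxSub]

lemma quotA_of_forall_leafPos (p : List Bool → Bool) (t : BTree) (q : List Bool)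
    (h : ∀ s ∈ leafPos t, p (q ++ s)) : quotA p t q = none := by
  induction t generalizing q with
  | leaf => simpa [quotA, leafPos] using h
  | node l r ihl ihr =>
    simp only [leafPos, List.mem_append, List.mem_map] at h
    rw [quotA, ihl _ fun s hs => by simpa using h _ (.inl ⟨s, hs, rfl⟩),
      ihr _ fun s hs => by simpa using h _ (.inr ⟨s, hs, rfl⟩)]

lemma nodup_leafPos (t : BTree) : (leafPos t).Nodup := by
  induction t with
  | leaf => simp [leafPos]
  | node l r ihl ihr =>
    refine List.nodup_append.2 ⟨ihl.map List.cons_injective, ihr.map List.cons_injective, ?_⟩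
    simp

-- The leaves of `comb (N + 1)` sit at `botPos N` (the bottom leaf) and at `rightPos i`, `i < N`
-- (the right child at depth `i + 1`).
def botPos (n : ℕ) : List Bool := List.replicate n false

def rightPos (i : ℕ) : List Bool := List.replicate i false ++ [true]

lemma rightPos_zero : rightPos 0 = [true] := rfl

lemma rightPos_succ (i : ℕ) : rightPos (i + 1) = false :: rightPos i := rfl

lemma rightPos_injective : Function.Injective rightPos := fun i j h => by
  simpa [rightPos] using congrArg List.length h

lemma rightPos_ne_botPos (i n : ℕ) : rightPos i ≠ botPos n := fun h => by
  have : true ∈ botPos n := h ▸ by simp [rightPos]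
  simp [botPos, List.mem_replicate] at this

lemma comb_add_two (N : ℕ) : comb (N + 2) = node (comb (N + 1)) leaf := rfl

lemma leafPos_comb_add_two (N : ℕ) :
    leafPos (comb (N + 2)) = (leafPos (comb (N + 1))).map (List.cons false) ++ [[true]] := rfl

lemma leafPos_comb (N : ℕ) :
    leafPos (comb (N + 1)) = botPos N :: (List.range N).reverse.map rightPos := by
  induction N with
  | zero => rfl
  | succ N ih =>
    rw [leafPos_comb_add_two, ih, List.range_succ_eq_map]
    simp only [List.map_cons, List.reverse_cons, List.map_append, List.map_map, List.map_reverse]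
    rfl

lemma toFinset_leafPos_comb (N : ℕ) :
    (leafPos (comb (N + 1))).toFinset = insert (botPos N) ((range N).image rightPos) := by
  ext s
  simp [leafPos_comb]

lemma length_leafPos_comb (N : ℕ) : (leafPos (comb (N + 1))).length = N + 1 := by
  simp [leafPos_comb]

lemma quotA_comb (p : List Bool → Bool) (N : ℕ) :
    quotA p (comb (N + 1)) [] =
      if (leafPos (comb (N + 1))).countP (fun s => !p s) = 0 then none
      else some (comb ((leafPos (comb (N + 1))).countP (fun s => !p s))) := by
  induction N generalizing p with
  | zero => cases h : p [] <;> simp [quotA, leafPos, comb, h]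
  | succ N ih =>
    rw [comb_add_two, quotA_node_nil, ih, ← comb_add_two, leafPos_comb_add_two,
      List.countP_append, List.countP_map, Function.comp_def]
    generalize (leafPos (comb (N + 1))).countP (fun s => !p (false :: s)) = c
    cases h : p [true] <;> rcases c with _ | c <;> simp [quotA, h, Option.merge] <;> rfl

lemma botPos_mem_leafPos_comb (N : ℕ) : botPos N ∈ leafPos (comb (N + 1)) := by
  simp [leafPos_comb]

lemma rightPos_mem_leafPos_comb {i N : ℕ} (hi : i < N) :
    rightPos i ∈ leafPos (comb (N + 1)) := by
  simpa [leafPos_comb] using .inr ⟨i, hi, rfl⟩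

lemma maxSub_comb_of_botPos_eq_false (p : List Bool → Bool) (N : ℕ)
    (hb : p (botPos N) = false) :
    maxSub p (comb (N + 1)) [] = List.replicate ((leafPos (comb (N + 1))).countP p) leaf := by
  induction N generalizing p with
  | zero =>
    change maxSub p leaf [] = List.replicate ((leafPos leaf).countP p) leaf
    simp_all [maxSub, leafPos, botPos]
  | succ N ih =>
    have hall : (leafPos (comb (N + 2))).all p = false :=
      List.all_eq_false.2 ⟨botPos (N + 1), botPos_mem_leafPos_comb _, by simp [hb]⟩
    rw [comb_add_two, maxSub_node_nil, ← comb_add_two, hall, if_neg Bool.false_ne_true,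
      ih _ hb, leafPos_comb_add_two, List.countP_append, List.countP_map, Function.comp_def]
    cases h : p [true] <;> simp [maxSub, h, List.replicate_succ']

lemma maxSub_comb_of_run (p : List Bool → Bool) {k N : ℕ} (hk : k < N) (hb : p (botPos N))
    (hrun : ∀ i, N - k ≤ i → i < N → p (rightPos i))
    (hbrk : p (rightPos (N - k - 1)) = false) :
    maxSub p (comb (N + 1)) [] =
      comb (k + 1) :: List.replicate (Nat.count (fun i => p (rightPos i)) (N - k - 1)) leaf := by
  induction N generalizing p with
  | zero => omega
  | succ N ih =>
    have hall : (leafPos (comb (N + 2))).all p = false :=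
      List.all_eq_false.2 ⟨_, rightPos_mem_leafPos_comb (by omega : N + 1 - k - 1 < N + 1),
        by simp [hbrk]⟩
    rw [comb_add_two, maxSub_node_nil, ← comb_add_two, hall, if_neg Bool.false_ne_true]
    rcases Nat.lt_succ_iff_lt_or_eq.1 hk with hk | rfl
    · rw [ih (fun s => p (false :: s)) hk hb (fun i h1 h2 => hrun (i + 1) (by omega) (by omega))
        (by rwa [show N + 1 - k - 1 = N - k - 1 + 1 by omega] at hbrk),
        show N + 1 - k - 1 = N - k - 1 + 1 by omega, Nat.count_succ']
      cases h : p [true] <;>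
        simp [maxSub, List.replicate_succ', rightPos_succ, rightPos_zero, h] <;> rfl
    · have hall' : ∀ s ∈ leafPos (comb (k + 1)), p (false :: s) := by
        simp only [leafPos_comb, List.mem_cons, List.mem_map, List.mem_reverse, List.mem_range]
        rintro s (rfl | ⟨i, hi, rfl⟩)
        · exact hb
        · exact hrun (i + 1) (by omega) (by omega)
      rw [maxSub_of_forall_leafPos _ _ _ hall']
      simp_all [maxSub, rightPos]

end BTree

open BTree

lemma List.countP_mem_eq_card {α : Type*} [DecidableEq α] {L : List α} (hL : L.Nodup)
    {A : Finset α} (hA : A ⊆ L.toFinset) : L.countP (fun a => decide (a ∈ A)) = #A := by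
  rw [List.countP_eq_length_filter, ← List.toFinset_card_of_nodup (hL.filter _),
    List.toFinset_filter]
  simp only [decide_eq_true_eq, Finset.filter_mem_eq_inter, Finset.inter_eq_right.2 hA]

lemma List.countP_notMem_eq_length_sub_card {α : Type*} [DecidableEq α] {L : List α}
    (hL : L.Nodup) {A : Finset α} (hA : A ⊆ L.toFinset) :
    L.countP (fun a => !decide (a ∈ A)) = L.length - #A := by
  rw [List.length_eq_countP_add_countP (fun a => decide (a ∈ A)), List.countP_mem_eq_card hL hA]
  simp

-- `I ⊊ range N` is split according to its maximal final segment `Ico (N - k) N`,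
-- so that `N - k - 1 ∉ I`.
lemma sum_powerset_range_eq_add_sum_run {M : Type*} [AddCommMonoid M] (N : ℕ)
    (F : Finset ℕ → M) :
    ∑ I ∈ (range N).powerset, F I =
      F (range N) +
        ∑ k ∈ range N, ∑ J ∈ (range (N - k - 1)).powerset, F (J ∪ Ico (N - k) N) := by
  induction N generalizing F with
  | zero => simp
  | succ N ih =>
    conv_lhs =>
      rw [range_add_one, sum_powerset_insert notMem_range_self, ih fun I => F (insert N I)]
    rw [sum_range_succ' _ N, ← range_add_one]
    simp only [Nat.sub_zero, Nat.add_sub_cancel, Ico_self, union_empty]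
    rw [add_comm, add_assoc]
    congr 2
    refine sum_congr rfl fun k hk => ?_
    rw [show N + 1 - (k + 1) = N - k by omega, show N - k - 1 = N - (k + 1) by omega,
      Nat.Ico_succ_right_eq_insert_Ico (by omega : N - k ≤ N)]
    simp only [union_insert]

lemma sum_powerset_image_of_injective {α β M : Type*} [DecidableEq β] [AddCommMonoid M]
    {f : α → β} (hf : Function.Injective f) (s : Finset α) (F : Finset β → M) :
    ∑ T ∈ (s.image f).powerset, F T = ∑ I ∈ s.powerset, F (I.image f) := by
  classical
  rw [powerset_image, sum_image (image_injOn_powerset_of_injOn hf.injOn)]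

noncomputable def cutTerm (T : BTree) (A : Finset (List Bool)) : V ⊗[ℚ] V :=
  fδ ↑(maxSub (fun q => decide (q ∈ A)) T []) ⊗ₜ[ℚ]
    fδ (optForest (quotA (fun q => decide (q ∈ A)) T []))

lemma treeDelta_eq_sum_cutTerm (T : BTree) :
    treeDelta T = ∑ A ∈ (leafPos T).toFinset.powerset, cutTerm T A := rfl

lemma cutTerm_leafPos (T : BTree) : cutTerm T (leafPos T).toFinset = fδ {T} ⊗ₜ[ℚ] fδ 0 := by
  have hall : ∀ s ∈ leafPos T, decide (s ∈ (leafPos T).toFinset) := by simp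
  rw [cutTerm, maxSub_of_forall_leafPos _ _ _ hall, quotA_of_forall_leafPos _ _ _ hall]
  rfl

lemma cutTerm_comb_image_rightPos {N : ℕ} {I : Finset ℕ} (hI : I ⊆ range N) :
    cutTerm (comb (N + 1)) (I.image rightPos) =
      fδ (Multiset.replicate #I leaf) ⊗ₜ[ℚ] fδ {comb (N + 1 - #I)} := by
  have hsub : I.image rightPos ⊆ (leafPos (comb (N + 1))).toFinset := by
    rw [toFinset_leafPos_comb]
    exact (image_subset_image hI).trans (subset_insert _ _)
  have hcard : #(I.image rightPos) = #I := card_image_of_injective _ rightPos_injective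
  have hI' : #I ≤ N := by simpa using card_le_card hI
  rw [cutTerm, maxSub_comb_of_botPos_eq_false _ _ (by simp [rightPos_ne_botPos]), quotA_comb,
    List.countP_mem_eq_card (nodup_leafPos _) hsub,
    List.countP_notMem_eq_length_sub_card (nodup_leafPos _) hsub, length_leafPos_comb, hcard,
    if_neg (by omega)]
  rfl

lemma cutTerm_comb_insert_botPos {N k : ℕ} {J : Finset ℕ} (hk : k < N)
    (hJ : J ⊆ range (N - k - 1)) :
    cutTerm (comb (N + 1)) (insert (botPos N) ((J ∪ Ico (N - k) N).image rightPos)) =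
      fδ (comb (k + 1) ::ₘ Multiset.replicate #J leaf) ⊗ₜ[ℚ] fδ {comb (N - k - #J)} := by
  set A := insert (botPos N) ((J ∪ Ico (N - k) N).image rightPos)
  have hJ' : ∀ i ∈ J, i < N - k - 1 := fun i hi => mem_range.1 (hJ hi)
  have hJcard : #J ≤ N - k - 1 := by simpa using card_le_card hJ
  have hmem : ∀ i, rightPos i ∈ A ↔ i ∈ J ∨ N - k ≤ i ∧ i < N := by
    simp [A, rightPos_ne_botPos, rightPos_injective.eq_iff]
  have hsub : A ⊆ (leafPos (comb (N + 1))).toFinset := by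
    rw [toFinset_leafPos_comb]
    refine insert_subset_insert _ (image_subset_image fun i hi => ?_)
    rcases mem_union.1 hi with hi | hi
    · exact mem_range.2 (by have := hJ' i hi; omega)
    · exact mem_range.2 (mem_Ico.1 hi).2
  have hcard : #A = #J + k + 1 := by
    rw [card_insert_of_notMem (by simp [rightPos_ne_botPos]),
      card_image_of_injective _ rightPos_injective, card_union_of_disjoint, Nat.card_Ico]
    · omega
    · exact disjoint_left.2 fun i hi hi' => by have := hJ' i hi; have := (mem_Ico.1 hi').1; omega
  have hcount : Nat.count (fun i => decide (rightPos i ∈ A)) (N - k - 1) = #J := by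
    rw [Nat.count_eq_card_filter_range]
    congr 1
    ext i
    by_cases hi : i ∈ J <;> simp [hmem, hi, hJ' i]
    omega
  have hbrk : N - k - 1 ∉ J := fun h => (hJ' _ h).false
  rw [cutTerm, maxSub_comb_of_run _ hk (by simp [A])
      (fun i h1 h2 => by simp [hmem, h1, h2]) (by simp [hmem, hbrk]; omega),
    hcount, quotA_comb, List.countP_notMem_eq_length_sub_card (nodup_leafPos _) hsub,
    length_leafPos_comb, hcard, if_neg (by omega), show N + 1 - (#J + k + 1) = N - k - #J by omega]
  rfl

lemma treeDelta_comb_succ (N : ℕ) :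
    treeDelta (comb (N + 1)) =
      ∑ i ∈ range (N + 1), N.choose i •
          (fδ (Multiset.replicate i leaf) ⊗ₜ[ℚ] fδ {comb (N + 1 - i)}) +
        (fδ {comb (N + 1)} ⊗ₜ[ℚ] fδ 0 +
          ∑ k ∈ range N, ∑ l ∈ range (N - k), (N - k - 1).choose l •
            (fδ (comb (k + 1) ::ₘ Multiset.replicate l leaf) ⊗ₜ[ℚ]
              fδ {comb (N - k - l)})) := by
  rw [treeDelta_eq_sum_cutTerm, toFinset_leafPos_comb,
    sum_powerset_insert (by simp [rightPos_ne_botPos]),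
    sum_powerset_image_of_injective rightPos_injective,
    sum_powerset_image_of_injective rightPos_injective (F := fun T => cutTerm _ (insert _ T)),
    sum_powerset_range_eq_add_sum_run N fun I => cutTerm _ (insert _ (I.image rightPos)),
    ← toFinset_leafPos_comb, cutTerm_leafPos]
  congr 1
  · rw [sum_congr rfl fun I hI => cutTerm_comb_image_rightPos (mem_powerset.1 hI),
      sum_powerset_apply_card fun i => fδ (.replicate i leaf) ⊗ₜ[ℚ] fδ {comb (N + 1 - i)},
      card_range]
  · refine congrArg _ (sum_congr rfl fun k hk => ?_)
    rw [sum_congr rfl fun J hJ => cutTerm_comb_insert_botPos (mem_range.1 hk) (mem_powerset.1 hJ),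
      sum_powerset_apply_card fun l =>
        fδ (comb (k + 1) ::ₘ .replicate l leaf) ⊗ₜ[ℚ] fδ {comb (N - k - l)}, card_range,
      Nat.sub_add_cancel (by simp at hk; omega)]

lemma eq_leaf_of_mem_maxSub_leaf {p : List Bool → Bool} {q : List Bool} {t : BTree}
    (ht : t ∈ maxSub p leaf q) : t = leaf := by
  rw [maxSub] at ht
  split_ifs at ht <;> simp_all

lemma mem_maxSub_comb {p : List Bool → Bool} {N : ℕ} {q : List Bool} {t : BTree}
    (ht : t ∈ maxSub p (comb (N + 1)) q) : ∃ k, t = comb (k + 1) := by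
  induction N generalizing q with
  | zero => exact ⟨0, eq_leaf_of_mem_maxSub_leaf ht⟩
  | succ N ih =>
    rw [comb_add_two, maxSub] at ht
    split_ifs at ht
    · exact ⟨N + 1, List.mem_singleton.1 ht⟩
    · rcases List.mem_append.1 ht with ht | ht
      · exact ih ht
      · exact ⟨0, eq_leaf_of_mem_maxSub_leaf ht⟩

lemma combForest_maxSub_comb (p : List Bool → Bool) (N : ℕ) :
    CombForest ↑(maxSub p (comb (N + 1)) []) := fun _ ht => mem_maxSub_comb ht

lemma combForest_quotA_comb (p : List Bool → Bool) (N : ℕ) :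
    CombForest (optForest (quotA p (comb (N + 1)) [])) := by
  rw [quotA_comb]
  split_ifs with h
  · simp [optForest, CombForest]
  · intro t ht
    exact ⟨_, (Multiset.mem_singleton.1 ht).trans
      (congrArg comb (Nat.succ_pred_eq_of_ne_zero h).symm)⟩

lemma treeDelta_comb_mem_span (N : ℕ) :
    treeDelta (comb (N + 1)) ∈ Submodule.span ℚ
      {x : V ⊗[ℚ] V | ∃ f g : Multiset BTree, CombForest f ∧ CombForest g ∧
        x = fδ f ⊗ₜ[ℚ] fδ g} :=
  Submodule.sum_mem _ fun _ _ => Submodule.subset_span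
    ⟨_, _, combForest_maxSub_comb _ N, combForest_quotA_comb _ N, rfl⟩

open BTree in
/-- The coproduct of the comb tree `C_n` (`n ≥ 2`) in the Hopf algebra of
binary forests:
`Δ(C_n) = Σ_{i=0}^{n-2} C(n-2,i)·C_1^i ⊗ C_{n-i}
 + 2·Σ_{j=0}^{n-2} C(n-2,j)·C_1^{j+1} ⊗ C_{n-j-1}
 + Σ_{k=2}^{n-1} Σ_{ℓ=0}^{n-k-1} C(n-k-1,ℓ)·C_k·C_1^ℓ ⊗ C_{n-k-ℓ} + C_n ⊗ 1`;
in particular the comb trees generate a Hopf subalgebra (the coproduct of a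
comb lies in the span of tensors of comb forests). -/
theorem comb_coproduct (n : ℕ) (hn : 2 ≤ n) :
    treeDelta (comb n) =
      (∑ i ∈ Finset.range (n - 1), ((n - 2).choose i) •
        (fδ (Multiset.replicate i BTree.leaf) ⊗ₜ[ℚ] fδ {comb (n - i)}))
      + 2 • (∑ j ∈ Finset.range (n - 1), ((n - 2).choose j) •
        (fδ (Multiset.replicate (j + 1) BTree.leaf) ⊗ₜ[ℚ] fδ {comb (n - j - 1)}))
      + (∑ k ∈ Finset.Icc 2 (n - 1), ∑ l ∈ Finset.range (n - k), ((n - k - 1).choose l) •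
        (fδ (comb k ::ₘ Multiset.replicate l BTree.leaf) ⊗ₜ[ℚ] fδ {comb (n - k - l)}))
      + fδ {comb n} ⊗ₜ[ℚ] fδ 0 ∧
    treeDelta (comb n) ∈ Submodule.span ℚ
      {x : V ⊗[ℚ] V | ∃ f g : Multiset BTree, CombForest f ∧ CombForest g ∧
        x = fδ f ⊗ₜ[ℚ] fδ g} := by
  obtain ⟨m, rfl⟩ : ∃ m, n = m + 2 := ⟨n - 2, by omega⟩
  refine ⟨?_, treeDelta_comb_mem_span (m + 1)⟩
  have hpascal : ∑ i ∈ range (m + 2), (m + 1).choose i •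
        (fδ (Multiset.replicate i leaf) ⊗ₜ[ℚ] fδ {comb (m + 2 - i)}) =
      ∑ i ∈ range (m + 2 - 1), (m + 2 - 2).choose i •
          (fδ (Multiset.replicate i leaf) ⊗ₜ[ℚ] fδ {comb (m + 2 - i)}) +
        ∑ j ∈ range (m + 2 - 1), (m + 2 - 2).choose j •
          (fδ (Multiset.replicate (j + 1) leaf) ⊗ₜ[ℚ] fδ {comb (m + 2 - j - 1)}) :=
    sum_choose_succ_nsmul (fun i _ => fδ (.replicate i leaf) ⊗ₜ[ℚ] fδ {comb (m + 2 - i)}) m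
  have hruns : ∑ k ∈ range (m + 1), ∑ l ∈ range (m + 1 - k), (m + 1 - k - 1).choose l •
        (fδ (comb (k + 1) ::ₘ Multiset.replicate l leaf) ⊗ₜ[ℚ]
          fδ {comb (m + 1 - k - l)}) =
      ∑ j ∈ range (m + 2 - 1), (m + 2 - 2).choose j •
          (fδ (Multiset.replicate (j + 1) leaf) ⊗ₜ[ℚ] fδ {comb (m + 2 - j - 1)}) +
        ∑ k ∈ Icc 2 (m + 2 - 1), ∑ l ∈ range (m + 2 - k), (m + 2 - k - 1).choose l •
          (fδ (comb k ::ₘ Multiset.replicate l leaf) ⊗ₜ[ℚ]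
            fδ {comb (m + 2 - k - l)}) := by
    rw [sum_range_succ', add_comm, ← Ico_add_one_right_eq_Icc, sum_Ico_eq_sum_range]
    congr 1
    · refine sum_congr rfl fun l _ => ?_
      rw [show m + 1 - 0 - l = m + 2 - l - 1 by omega]
      rfl
    · refine sum_congr (by simp) fun k hk => ?_
      rw [show 2 + k = k + 1 + 1 by omega, show m + 2 - (k + 1 + 1) = m + 1 - (k + 1) by omega]
  rw [treeDelta_comb_succ (m + 1), show m + 1 + 1 = m + 2 from rfl, hpascal, hruns, two_smul]
  abel
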